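/- For all integers m, n ≥ 2, the Cartesian product P_m □ P_n of two paths (the m × n grid graph) satisfies meg(P_m □ P_n) = m·n − (m−2)·(n−2), and P_m □ P_n has a unique minimal MEG-set. -/

import Mathlib

open SimpleGraph

/-- `S` is a monitoring edge-geodetic set (MEG-set) of `G`: for every edge `e` of `G`
there are `x, y ∈ S` whose distance in `G − e` differs from their distance in `G`
(including the case that they become disconnected in `G − e`). -/
def IsMEGSet {V : Type*} (G : SimpleGraph V) (S : Set V) : Prop :=
  ∀ e ∈ G.edgeSet, ∃ x ∈ S, ∃ y ∈ S,
    ¬ (G.deleteEdges {e}).Reachable x y ∨ (G.deleteEdges {e}).dist x y ≠ G.dist x y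

/-- The monitoring edge-geodetic number: the minimum cardinality of an MEG-set. -/
noncomputable def meg {V : Type*} [Fintype V] (G : SimpleGraph V) : ℕ :=
  sInf {n | ∃ S : Set V, IsMEGSet G S ∧ S.ncard = n}

/-- The strong product `G ⊠ H` of two simple graphs: `(a,b)` adjacent to `(c,d)` iff
`a = c` and `bd ∈ E(H)`, or `b = d` and `ac ∈ E(G)`, or `ac ∈ E(G)` and `bd ∈ E(H)`. -/
def strongProd {α β : Type*} (G : SimpleGraph α) (H : SimpleGraph β) :
    SimpleGraph (α × β) where
  Adj x y := (x.1 = y.1 ∧ H.Adj x.2 y.2) ∨ (x.2 = y.2 ∧ G.Adj x.1 y.1) ∨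
    (G.Adj x.1 y.1 ∧ H.Adj x.2 y.2)
  symm := ⟨fun x y => by
    rintro (⟨h1, h2⟩ | ⟨h1, h2⟩ | ⟨h1, h2⟩)
    · exact Or.inl ⟨h1.symm, h2.symm⟩
    · exact Or.inr (Or.inl ⟨h1.symm, h2.symm⟩)
    · exact Or.inr (Or.inr ⟨h1.symm, h2.symm⟩)⟩
  loopless := ⟨fun x => by
    rintro (⟨_, h⟩ | ⟨_, h⟩ | ⟨h, _⟩)
    · exact H.irrefl h
    · exact G.irrefl h
    · exact G.irrefl h⟩

infixl:70 " ⊠ " => strongProd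

/-
Let `B` be the boundary of the grid: the vertices with a coordinate equal to `0` or to its
maximum. `B` is an MEG-set, because the edge between columns `u` and `u + 1` of row `j` lies on the
unique geodesic between the two ends `(0, j)` and `(m - 1, j)` of that row (likewise for columns).
Conversely, for a boundary vertex `p`, say `p = (0, j)`, any two vertices other than `p` are joined
by an L-shaped geodesic avoiding the edge `(0, j)(1, j)`; so only pairs containing `p` monitor
that edge, and `p` lies in every MEG-set. Hence `B` is the unique minimal MEG-set and
`meg = |B| = m n - (m - 2) (n - 2)`.
-/

namespace SimpleGraph

section Monitoring

variable {V : Type*} {G : SimpleGraph V} {x y v : V} {e : Sym2 V}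

/-- `IsMEGSet G S` unfolds to `∀ e ∈ G.edgeSet, ∃ x ∈ S, ∃ y ∈ S, G.Monitors x y e`. -/
def Monitors (G : SimpleGraph V) (x y : V) (e : Sym2 V) : Prop :=
  ¬ (G.deleteEdges {e}).Reachable x y ∨ (G.deleteEdges {e}).dist x y ≠ G.dist x y

theorem Monitors.symm (h : G.Monitors x y e) : G.Monitors y x e := by
  unfold Monitors at *
  rw [dist_comm, G.dist_comm]
  exact h.imp (fun h' hr => h' hr.symm) id

theorem monitors_iff :
    G.Monitors x y e ↔ ∀ w : G.Walk x y, w.length = G.dist x y → e ∈ w.edges := by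
  constructor
  · intro hm w hw
    by_contra he
    have hr : (G.deleteEdges {e}).Reachable x y := ⟨w.toDeleteEdge e he⟩
    refine hm.elim (· hr) (· (le_antisymm ?_ (hr.dist_anti (G.deleteEdges_le _))))
    calc _ ≤ (w.toDeleteEdge e he).length := dist_le _
      _ = G.dist x y := by rw [Walk.length_transfer, hw]
  · intro h
    rw [Monitors, or_iff_not_imp_left, not_not]
    intro hr hd
    obtain ⟨w, hw⟩ := hr.exists_walk_length_eq_dist
    have he := h (w.mapLe (G.deleteEdges_le {e})) (by rw [Walk.length_mapLe, hw, hd])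
    rw [Walk.edges_mapLe_eq_edges] at he
    simpa using w.edges_subset_edgeSet he

theorem Walk.not_monitors (w : G.Walk x y) (hw : w.length = G.dist x y) (he : e ∉ w.edges) :
    ¬ G.Monitors x y e :=
  fun hm => he ((monitors_iff.mp hm) w hw)

theorem mem_of_isMEGSet_of_forall_not_monitors {S : Set V} (hS : IsMEGSet G S) (he : e ∈ G.edgeSet)
    (h : ∀ x y, x ≠ v → y ≠ v → ¬ G.Monitors x y e) : v ∈ S := by
  obtain ⟨x, hx, y, hy, hm⟩ := hS e he
  by_contra hv
  exact h x y (fun h => hv (h ▸ hx)) (fun h => hv (h ▸ hy)) hm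

theorem meg_eq_ncard_of_forall_subset [Fintype V] {S : Set V} (hS : IsMEGSet G S)
    (hmin : ∀ R, IsMEGSet G R → S ⊆ R) : meg G = S.ncard :=
  le_antisymm (Nat.sInf_le ⟨S, hS, rfl⟩) <| le_csInf ⟨_, S, hS, rfl⟩ <| by
    rintro _ ⟨R, hR, rfl⟩
    exact Set.ncard_le_ncard (hmin R hR) (Set.toFinite R)

end Monitoring

section BoxProd

variable {α β : Type*} {G : SimpleGraph α} {H : SimpleGraph β}

theorem dist_boxProd {x y : α × β} (h₁ : G.Reachable x.1 y.1) (h₂ : H.Reachable x.2 y.2) :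
    (G □ H).dist x y = G.dist x.1 y.1 + H.dist x.2 y.2 := by
  have h := edist_boxProd (G := G) (H := H) x y
  rw [← (reachable_boxProd.mpr ⟨h₁, h₂⟩).coe_dist_eq_edist, ← h₁.coe_dist_eq_edist,
    ← h₂.coe_dist_eq_edist] at h
  exact_mod_cast h

@[simp]
theorem Walk.length_boxProdLeft {a c : α} (w : G.Walk a c) (b : β) :
    (w.boxProdLeft H b).length = w.length :=
  w.length_map _

@[simp]
theorem Walk.length_boxProdRight {b d : β} (w : H.Walk b d) (a : α) :
    (w.boxProdRight G a).length = w.length :=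
  w.length_map _

@[simp]
theorem Walk.support_boxProdLeft {a c : α} (w : G.Walk a c) (b : β) :
    (w.boxProdLeft H b).support = w.support.map (·, b) :=
  w.support_map _

@[simp]
theorem Walk.support_boxProdRight {b d : β} (w : H.Walk b d) (a : α) :
    (w.boxProdRight G a).support = w.support.map (a, ·) :=
  w.support_map _

variable (hG : G.Preconnected) (hH : H.Preconnected)
include hG hH

/-- Geodesics of `G □ H` between two vertices of a fibre `α × {b}` stay in that fibre: a step
in the `H`-direction would cost `H`-distance that is never recovered. -/
theorem Walk.exists_walk_left_of_length_eq_dist {x y : α × β} (w : (G □ H).Walk x y)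
    (hw : w.length = (G □ H).dist x y) (hxy : x.2 = y.2) :
    ∃ w' : G.Walk x.1 y.1, w'.length = w.length ∧ ∀ e ∈ w'.edges, e.map (·, x.2) ∈ w.edges := by
  induction w with
  | nil => exact ⟨nil, rfl, by simp⟩
  | @cons x z y h p ih =>
    have hxy' : (G □ H).dist x y = G.dist x.1 y.1 := by
      rw [dist_boxProd (hG _ _) (hH _ _), hxy, dist_self, add_zero]
    have hzy := dist_boxProd (x := z) (y := y) (hG _ _) (hH _ _)
    have hp := dist_le p
    rw [Walk.length_cons, hxy'] at hw
    rcases boxProd_adj.mp h with ⟨hG₁, hG₂⟩ | ⟨hH₁, hH₂⟩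
    · have htri := (hG z.1 y.1).dist_triangle_right x.1
      rw [dist_eq_one_iff_adj.mpr hG₁] at htri
      obtain ⟨w', hw'l, hw'e⟩ := ih (by omega) (hG₂.symm.trans hxy)
      refine ⟨cons hG₁ w', by rw [length_cons, length_cons, hw'l], fun e he => ?_⟩
      rw [edges_cons, List.mem_cons] at he ⊢
      rcases he with rfl | he
      · exact .inl (congrArg₂ (fun a b => s(a, b)) rfl (Prod.ext rfl hG₂))
      · exact .inr (hG₂ ▸ hw'e e he)
    · have : 0 < H.dist z.2 y.2 := (hH _ _).pos_dist_of_ne (hxy ▸ hH₁.ne.symm)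
      rw [← hH₂] at hzy
      omega

theorem Monitors.boxProd_left {a c : α} {e : Sym2 α} (h : G.Monitors a c e) (b : β) :
    (G □ H).Monitors (a, b) (c, b) (e.map (·, b)) := by
  rw [monitors_iff] at h ⊢
  intro w hw
  obtain ⟨w', hw'l, hw'e⟩ := w.exists_walk_left_of_length_eq_dist hG hH hw rfl
  refine hw'e e (h w' ?_)
  rw [hw'l, hw, dist_boxProd (hG _ _) (hH _ _), dist_self, add_zero]

theorem Monitors.boxProd_comm {x y : α × β} {e : Sym2 (α × β)} (h : (G □ H).Monitors x y e) :
    (H □ G).Monitors x.swap y.swap (e.map Prod.swap) := by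
  rw [monitors_iff] at h ⊢
  intro w hw
  have hw' : (w.map (boxProdComm H G).toHom).length = (G □ H).dist x y := by
    rw [Walk.length_map, hw, dist_boxProd (hH _ _) (hG _ _), dist_boxProd (hG _ _) (hH _ _),
      add_comm]
    rfl
  obtain ⟨e', he', rfl⟩ := List.mem_map.mp (Walk.edges_map _ _ ▸ h _ hw')
  simpa [Sym2.map_map] using he'

theorem not_monitors_boxProd_left {a a' : α} (haa' : G.Adj a a')
    (hgeo : ∀ c d, c ≠ a → d ≠ a → ∃ w : G.Walk c d, w.length = G.dist c d ∧ a ∉ w.support)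
    (b : β) {x y : α × β} (hx : x ≠ (a, b)) (hy : y ≠ (a, b)) :
    ¬ (G □ H).Monitors x y s((a, b), (a', b)) := by
  -- If `x` lies in column `a`, walk along row `x₂ ≠ b`, then along column `y₁`. Otherwise
  -- (by symmetry also `y₁ ≠ a`), walk along column `x₁`, then along row `y₂` on a geodesic
  -- avoiding `a`.
  have corner : ∀ x₂ y₁ y₂, x₂ ≠ b → ¬ (G □ H).Monitors (a, x₂) (y₁, y₂) s((a, b), (a', b)) := by
    intro x₂ y₁ y₂ hx₂
    obtain ⟨wG, hwG⟩ := (hG a y₁).exists_walk_length_eq_dist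
    obtain ⟨wH, hwH⟩ := (hH x₂ y₂).exists_walk_length_eq_dist
    refine Walk.not_monitors ((wG.boxProdLeft H x₂).append (wH.boxProdRight G y₁)) ?_ ?_
    · simp [hwG, hwH, dist_boxProd (hG _ _) (hH _ _)]
    · intro he
      rw [Walk.edges_append, List.mem_append] at he
      rcases he with he | he
      · have := Walk.fst_mem_support_of_mem_edges _ he
        simp at this
        exact hx₂ this
      · have h1 := Walk.fst_mem_support_of_mem_edges _ he
        have h2 := Walk.snd_mem_support_of_mem_edges _ he
        simp at h1 h2
        exact haa'.ne (h1.2.symm.trans h2.2)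
  obtain ⟨x₁, x₂⟩ := x
  obtain ⟨y₁, y₂⟩ := y
  by_cases hxa : x₁ = a
  · subst hxa
    exact corner x₂ y₁ y₂ (fun h => hx (h ▸ rfl))
  by_cases hya : y₁ = a
  · subst hya
    exact fun h => corner y₂ x₁ x₂ (fun h => hy (h ▸ rfl)) h.symm
  obtain ⟨wG, hwG, haG⟩ := hgeo x₁ y₁ hxa hya
  obtain ⟨wH, hwH⟩ := (hH x₂ y₂).exists_walk_length_eq_dist
  refine Walk.not_monitors ((wH.boxProdRight G x₁).append (wG.boxProdLeft H y₂)) ?_ ?_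
  · simp [hwG, hwH, dist_boxProd (hG _ _) (hH _ _), add_comm]
  · intro he
    have := Walk.fst_mem_support_of_mem_edges _ he
    simp at this
    exact this.elim (hxa ·.2) (haG ·.1)

theorem Monitors.boxProd_right {b d : β} {e : Sym2 β} (h : H.Monitors b d e) (a : α) :
    (G □ H).Monitors (a, b) (a, d) (e.map (a, ·)) := by
  have := (h.boxProd_left hH hG a).boxProd_comm hH hG
  rwa [Sym2.map_map] at this

theorem not_monitors_boxProd_right {b b' : β} (hbb' : H.Adj b b')
    (hgeo : ∀ c d, c ≠ b → d ≠ b → ∃ w : H.Walk c d, w.length = H.dist c d ∧ b ∉ w.support)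
    (a : α) {x y : α × β} (hx : x ≠ (a, b)) (hy : y ≠ (a, b)) :
    ¬ (G □ H).Monitors x y s((a, b), (a, b')) := fun h =>
  not_monitors_boxProd_left hH hG hbb' hgeo a (Prod.swap_injective.ne hx)
    (Prod.swap_injective.ne hy) (h.boxProd_comm hG hH)

end BoxProd

section PathGraph

variable {n : ℕ}

theorem pathGraph_exists_adj (hn : 2 ≤ n) (a : Fin n) : ∃ a', (pathGraph n).Adj a a' := by
  by_cases h : (a : ℕ) + 1 < n
  · exact ⟨⟨a + 1, h⟩, pathGraph_adj.mpr (.inl rfl)⟩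
  · exact ⟨⟨a - 1, by omega⟩, pathGraph_adj.mpr (.inr (by simp; omega))⟩

theorem pathGraph_exists_walk_of_le {a c : Fin n} (h : a ≤ c) :
    ∃ w : (pathGraph n).Walk a c, w.length = (c : ℕ) - a ∧ ∀ q ∈ w.support, a ≤ q ∧ q ≤ c := by
  obtain ⟨k, hk⟩ := Nat.exists_eq_add_of_le (Fin.le_def.mp h)
  induction k generalizing a with
  | zero =>
    obtain rfl : a = c := Fin.ext (by omega)
    exact ⟨.nil, by simp, by simp⟩
  | succ k ih =>
    have ha : (a : ℕ) + 1 < n := by omega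
    obtain ⟨w, hw, hs⟩ := ih (a := ⟨a + 1, ha⟩) (Fin.le_def.mpr (by simp; omega)) (by simp; omega)
    refine ⟨.cons (pathGraph_adj.mpr (.inl rfl)) w, by simp [hw]; omega, ?_⟩
    simp only [Walk.support_cons, List.mem_cons, forall_eq_or_imp]
    refine ⟨⟨le_rfl, h⟩, fun q hq => ?_⟩
    have := hs q hq
    simp only [Fin.le_def] at this ⊢
    omega

theorem pathGraph_dist_le_length {a c : Fin n} (w : (pathGraph n).Walk a c) :
    Nat.dist a c ≤ w.length := by
  induction w with
  | nil => simp
  | cons h p ih =>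
    rw [Walk.length_cons]
    rcases pathGraph_adj.mp h with h | h <;> simp only [Nat.dist] at * <;> omega

theorem pathGraph_dist (a c : Fin n) : (pathGraph n).dist a c = Nat.dist a c := by
  wlog h : a ≤ c generalizing a c
  · rw [dist_comm, Nat.dist_comm]
    exact this c a (le_of_not_ge h)
  obtain ⟨w, hw, -⟩ := pathGraph_exists_walk_of_le h
  obtain ⟨w', hw'⟩ := (pathGraph_preconnected n a c).exists_walk_length_eq_dist
  refine le_antisymm ((dist_le w).trans ?_) (hw' ▸ pathGraph_dist_le_length w')
  rw [hw, Nat.dist_eq_sub_of_le (Fin.le_def.mp h)]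

theorem pathGraph_mem_edges_of_le {u v : Fin n} (huv : (u : ℕ) + 1 = v) {x y : Fin n}
    (w : (pathGraph n).Walk x y) (hxu : x ≤ u) (hvy : v ≤ y) : s(u, v) ∈ w.edges := by
  induction w with
  | nil =>
    simp only [Fin.le_def] at hxu hvy
    omega
  | @cons x z y h p ih =>
    rw [Walk.edges_cons, List.mem_cons]
    by_cases hzu : z ≤ u
    · exact .inr (ih hzu hvy)
    · have := pathGraph_adj.mp h
      simp only [Fin.le_def, not_le] at hxu hzu
      obtain rfl : x = u := Fin.ext (by omega)
      obtain rfl : z = v := Fin.ext (by omega)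
      exact .inl rfl

theorem pathGraph_monitors {a c u v : Fin n} (ha : (a : ℕ) = 0) (hc : (c : ℕ) = n - 1)
    (huv : (pathGraph n).Adj u v) : (pathGraph n).Monitors a c s(u, v) := by
  rw [monitors_iff]
  intro w _
  have hle : ∀ q : Fin n, a ≤ q ∧ q ≤ c := fun q => by
    simp only [Fin.le_def]
    omega
  rcases pathGraph_adj.mp huv with h | h
  · exact pathGraph_mem_edges_of_le h w (hle u).1 (hle v).2
  · exact Sym2.eq_swap ▸ pathGraph_mem_edges_of_le h w (hle v).1 (hle u).2

def pathEnds (n : ℕ) : Set (Fin n) := {a | (a : ℕ) = 0 ∨ (a : ℕ) = n - 1}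

theorem pathGraph_exists_geodesic_not_mem_support {a : Fin n} (ha : a ∈ pathEnds n)
    (c d : Fin n) (hc : c ≠ a) (hd : d ≠ a) :
    ∃ w : (pathGraph n).Walk c d, w.length = (pathGraph n).dist c d ∧ a ∉ w.support := by
  wlog h : c ≤ d generalizing c d
  · obtain ⟨w, hw, haw⟩ := this d c hd hc (le_of_not_ge h)
    exact ⟨w.reverse, by rw [Walk.length_reverse, hw, dist_comm], by simpa using haw⟩
  obtain ⟨w, hw, hs⟩ := pathGraph_exists_walk_of_le h
  refine ⟨w, by rw [hw, pathGraph_dist, Nat.dist_eq_sub_of_le (Fin.le_def.mp h)], fun haw => ?_⟩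
  have := hs a haw
  simp only [Fin.le_def, ne_eq, Fin.ext_iff] at this hc hd
  rcases ha with ha | ha <;> omega

theorem ncard_pathEnds_compl (hn : 2 ≤ n) : (pathEnds n)ᶜ.ncard = n - 2 := by
  have hends : pathEnds n = {⟨0, by omega⟩, ⟨n - 1, by omega⟩} := by
    ext a
    simp [pathEnds, Fin.ext_iff]
  have h2 : (pathEnds n).ncard = 2 := by
    rw [hends]
    exact Set.ncard_pair (by simp [Fin.ext_iff]; omega)
  have := Set.ncard_add_ncard_compl (pathEnds n)
  rw [h2, Nat.card_eq_fintype_card, Fintype.card_fin] at this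
  omega

end PathGraph

end SimpleGraph

def gridBoundary (m n : ℕ) : Set (Fin m × Fin n) := {p | p.1 ∈ pathEnds m ∨ p.2 ∈ pathEnds n}

theorem ncard_gridBoundary {m n : ℕ} (hm : 2 ≤ m) (hn : 2 ≤ n) :
    (gridBoundary m n).ncard = m * n - (m - 2) * (n - 2) := by
  have hcompl : (gridBoundary m n)ᶜ = (pathEnds m)ᶜ ×ˢ (pathEnds n)ᶜ := by
    ext
    simp [gridBoundary]
  have := Set.ncard_add_ncard_compl (gridBoundary m n)
  rw [hcompl, Set.ncard_prod, ncard_pathEnds_compl hm, ncard_pathEnds_compl hn,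
    Nat.card_eq_fintype_card, Fintype.card_prod, Fintype.card_fin, Fintype.card_fin] at this
  omega

theorem isMEGSet_gridBoundary (m n : ℕ) :
    IsMEGSet (pathGraph m □ pathGraph n) (gridBoundary m n) := by
  intro e he
  induction e using Sym2.ind with | _ p q => ?_
  obtain ⟨a, b⟩ := p
  obtain ⟨c, d⟩ := q
  have hm : 0 < m := a.pos
  have hn : 0 < n := b.pos
  rcases boxProd_adj.mp he with ⟨hac, rfl : b = d⟩ | ⟨hbd, rfl : a = c⟩
  · refine ⟨(⟨0, hm⟩, b), .inl (.inl rfl), (⟨m - 1, by omega⟩, b), .inl (.inr rfl), ?_⟩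
    exact (pathGraph_monitors (a := ⟨0, hm⟩) (c := ⟨m - 1, by omega⟩) rfl rfl hac).boxProd_left
      (pathGraph_preconnected m) (pathGraph_preconnected n) b
  · refine ⟨(a, ⟨0, hn⟩), .inr (.inl rfl), (a, ⟨n - 1, by omega⟩), .inr (.inr rfl), ?_⟩
    exact (pathGraph_monitors (a := ⟨0, hn⟩) (c := ⟨n - 1, by omega⟩) rfl rfl hbd).boxProd_right
      (pathGraph_preconnected m) (pathGraph_preconnected n) a

theorem gridBoundary_subset_of_isMEGSet {m n : ℕ} (hm : 2 ≤ m) (hn : 2 ≤ n)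
    {S : Set (Fin m × Fin n)} (hS : IsMEGSet (pathGraph m □ pathGraph n) S) :
    gridBoundary m n ⊆ S := by
  rintro ⟨a, b⟩ (ha | hb)
  · obtain ⟨a', haa'⟩ := pathGraph_exists_adj hm a
    exact mem_of_isMEGSet_of_forall_not_monitors hS (boxProd_adj_left.mpr haa') fun x y hx hy =>
      not_monitors_boxProd_left (pathGraph_preconnected m) (pathGraph_preconnected n) haa'
        (pathGraph_exists_geodesic_not_mem_support ha) b hx hy
  · obtain ⟨b', hbb'⟩ := pathGraph_exists_adj hn b
    exact mem_of_isMEGSet_of_forall_not_monitors hS (boxProd_adj_right.mpr hbb') fun x y hx hy =>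
      not_monitors_boxProd_right (pathGraph_preconnected m) (pathGraph_preconnected n) hbb'
        (pathGraph_exists_geodesic_not_mem_support hb) a hx hy

theorem meg_grid (m n : ℕ) (hm : 2 ≤ m) (hn : 2 ≤ n) :
    meg (pathGraph m □ pathGraph n) = m * n - (m - 2) * (n - 2) ∧
    ∃ S : Set (Fin m × Fin n), IsMEGSet (pathGraph m □ pathGraph n) S ∧
      ∀ R : Set (Fin m × Fin n), IsMEGSet (pathGraph m □ pathGraph n) R → S ⊆ R := by
  have hB := isMEGSet_gridBoundary m n
  have hmin := fun R => gridBoundary_subset_of_isMEGSet (S := R) hm hn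
  exact ⟨(meg_eq_ncard_of_forall_subset hB hmin).trans (ncard_gridBoundary hm hn), _, hB, hmin⟩
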